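/- Let Σₙ be a symmetric invertible real n×n matrix, k ∈ ℝ^n, and κ², β² ∈ ℝ. Define γ² := κ² - kᵀ Σₙ⁻¹ k and assume β² + γ² ≠ 0. Let Σ₊ denote the (n+1)×(n+1) block matrix [[Σₙ, k],[kᵀ, κ² + β²]] and let k₊ ∈ ℝ^{n+1} be the vector whose first n entries are those of k and whose last entry is κ². Then Σ₊ is invertible and κ² - k₊ᵀ Σ₊⁻¹ k₊ = (β² · γ²) / (β² + γ²). -/

import Mathlib

/-!
Bordering an invertible `Σₙ` by the column `k`, the row `kᵀ` and the corner `d = κ² + β²`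
gives, by the Schur complement, `det Σ₊ = det Σₙ · (d - kᵀΣₙ⁻¹k) = det Σₙ · (β² + γ²)`.
The system `Σ₊ x = k₊` is solved explicitly by `x = ((1 - t) Σₙ⁻¹k, t)` with
`t = γ² / (β² + γ²)`, and then `κ² - k₊ᵀx = (1 - t) γ²`.
-/

open Matrix

namespace Matrix

section CommRing

variable {R : Type*} [CommRing R] {m : Type*} [Fintype m]

theorem det_fromBlocks_replicateCol_replicateRow [DecidableEq m] (A : Matrix m m R) [Invertible A]
    (u v : m → R) (d : R) :
    (fromBlocks A (replicateCol (Fin 1) u) (replicateRow (Fin 1) v) !![d]).det =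
      A.det * (d - v ⬝ᵥ A⁻¹ *ᵥ u) := by
  rw [det_fromBlocks₁₁, invOf_eq_nonsing_inv, Matrix.mul_assoc, ← replicateCol_mulVec,
    replicateRow_mul_replicateCol]
  congr 1
  rw [det_fin_one]
  simp

theorem fromBlocks_replicateCol_replicateRow_mulVec_sumElim (A : Matrix m m R)
    (u v x : m → R) (d s : R) :
    fromBlocks A (replicateCol (Fin 1) u) (replicateRow (Fin 1) v) !![d] *ᵥ
        Sum.elim x (fun _ => s) =
      Sum.elim (A *ᵥ x + s • u) (fun _ => v ⬝ᵥ x + d * s) := by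
  rw [fromBlocks_mulVec]
  congr 1
  · ext i
    simp [mulVec, dotProduct, mul_comm]
  · ext i
    simp [replicateRow_mulVec_eq_const, dotProduct]

end CommRing

section Field

variable {K : Type*} [Field K] {m : Type*} [Fintype m] [DecidableEq m]

theorem fromBlocks_replicateCol_replicateRow_mulVec_eq {A : Matrix m m K} (hA : IsUnit A.det)
    {u v : m → K} {d : K} (hs : d - v ⬝ᵥ A⁻¹ *ᵥ u ≠ 0) (c : K) :
    let t := (c - v ⬝ᵥ A⁻¹ *ᵥ u) / (d - v ⬝ᵥ A⁻¹ *ᵥ u)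
    fromBlocks A (replicateCol (Fin 1) u) (replicateRow (Fin 1) v) !![d] *ᵥ
        Sum.elim ((1 - t) • A⁻¹ *ᵥ u) (fun _ => t) =
      Sum.elim u (fun _ => c) := by
  intro t
  rw [fromBlocks_replicateCol_replicateRow_mulVec_sumElim, mulVec_smul, mulVec_mulVec,
    mul_nonsing_inv _ hA, one_mulVec, dotProduct_smul, smul_eq_mul]
  congr 1
  · ext i
    simp only [Pi.add_apply, Pi.smul_apply, smul_eq_mul]
    ring
  · ext
    simp only [t]
    field_simp
    ring

theorem sub_dotProduct_inv_fromBlocks_replicateCol_replicateRow_mulVec {A : Matrix m m K}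
    (hA : IsUnit A.det) {u v : m → K} {d : K} (hs : d - v ⬝ᵥ A⁻¹ *ᵥ u ≠ 0) (c : K) :
    c - Sum.elim v (fun _ => c) ⬝ᵥ
        (fromBlocks A (replicateCol (Fin 1) u) (replicateRow (Fin 1) v) !![d])⁻¹ *ᵥ
          Sum.elim u (fun _ => c) =
      (d - c) * (c - v ⬝ᵥ A⁻¹ *ᵥ u) / (d - v ⬝ᵥ A⁻¹ *ᵥ u) := by
  have := invertibleOfIsUnitDet A hA
  have hM : IsUnit (fromBlocks A (replicateCol (Fin 1) u)
      (replicateRow (Fin 1) v) !![d]).det := by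
    rw [det_fromBlocks_replicateCol_replicateRow]
    exact hA.mul hs.isUnit
  have := invertibleOfIsUnitDet _ hM
  rw [inv_mulVec_eq_vec (fromBlocks_replicateCol_replicateRow_mulVec_eq hA hs c).symm,
    sumElim_dotProduct_sumElim, dotProduct_smul, smul_eq_mul]
  generalize v ⬝ᵥ A⁻¹ *ᵥ u = a at hs ⊢
  have hconst (t : K) : (fun _ : Fin 1 => c) ⬝ᵥ (fun _ => t) = c * t := by
    simp [dotProduct]
  rw [hconst]
  field_simp
  ring

end Field

end Matrix

theorem improved_error_formula (n : ℕ) (Sn : Matrix (Fin n) (Fin n) ℝ)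
    (hSn : IsUnit Sn.det)
    (k : Fin n → ℝ) (κ2 β2 : ℝ)
    (hne : β2 + (κ2 - k ⬝ᵥ Sn⁻¹ *ᵥ k) ≠ 0) :
    IsUnit (Matrix.fromBlocks Sn (Matrix.replicateCol (Fin 1) k)
      (Matrix.replicateRow (Fin 1) k) !![κ2 + β2]).det ∧
    κ2 - (Sum.elim k fun _ => κ2) ⬝ᵥ
        (Matrix.fromBlocks Sn (Matrix.replicateCol (Fin 1) k)
          (Matrix.replicateRow (Fin 1) k) !![κ2 + β2])⁻¹ *ᵥ (Sum.elim k fun _ => κ2) =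
      β2 * (κ2 - k ⬝ᵥ Sn⁻¹ *ᵥ k) / (β2 + (κ2 - k ⬝ᵥ Sn⁻¹ *ᵥ k)) := by
  have := invertibleOfIsUnitDet Sn hSn
  have hschur : κ2 + β2 - k ⬝ᵥ Sn⁻¹ *ᵥ k ≠ 0 := by
    rwa [add_comm κ2 β2, add_sub_assoc]
  constructor
  · rw [det_fromBlocks_replicateCol_replicateRow]
    exact hSn.mul hschur.isUnit
  · rw [sub_dotProduct_inv_fromBlocks_replicateCol_replicateRow_mulVec hSn hschur]
    ring
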